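/- On the Lie algebra r'_2 with brackets [e1,e3]=e3, [e1,e4]=e4, [e2,e3]=e4, [e2,e4]=-e3, let J be the orthogonal almost complex structure (with respect to the metric making e1,...,e4 orthonormal) defined by Je1 = -b2 e3 - b3 e4, Je2 = -b3 e3 + b2 e4, Je3 = b2 e1 + b3 e2, Je4 = b3 e1 - b2 e2, where b2² + b3² = 1. Then the Nijenhuis tensor satisfies N(e1,e2) = (1/2)(b2²+b3²) e2 ≠ 0; in particular J is not integrable. -/

import Mathlib

/-!
In `r'_2` the plane `span(e3, e4)` is an abelian ideal containing `J e1` and `J e2`, and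
`[e1, e2] = 0`, so only the two mixed terms of the Nijenhuis tensor survive.
`ad e1` is the identity on that ideal and `ad e2` a quarter turn on it, which makes
`[J e1, e2] = [e1, J e2] = -b3 e3 + b2 e4`; applying `J` gives `-(b2² + b3²) e2`.
-/

/-- The bracket of r'_2: [e1,e3]=e3, [e1,e4]=e4, [e2,e3]=e4, [e2,e4]=-e3. -/
def br2 (X Y : Fin 4 → ℝ) : Fin 4 → ℝ :=
  ![0, 0,
    (X 0 * Y 2 - X 2 * Y 0) - (X 1 * Y 3 - X 3 * Y 1),
    (X 0 * Y 3 - X 3 * Y 0) + (X 1 * Y 2 - X 2 * Y 1)]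

/-- The orthogonal almost complex structure Je1=-b2e3-b3e4, Je2=-b3e3+b2e4,
Je3=b2e1+b3e2, Je4=b3e1-b2e2. -/
def Jb (b2 b3 : ℝ) (X : Fin 4 → ℝ) : Fin 4 → ℝ :=
  ![b2 * X 2 + b3 * X 3, b3 * X 2 - b2 * X 3,
    -b2 * X 0 - b3 * X 1, -b3 * X 0 + b2 * X 1]

/-- basis vectors -/
def E (i : Fin 4) : Fin 4 → ℝ := Pi.single i 1

section Computations

variable (b2 b3 a b : ℝ)

lemma Jb_E_zero : Jb b2 b3 (E 0) = ![0, 0, -b2, -b3] := by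
  ext i; fin_cases i <;> simp [Jb, E]

lemma Jb_E_one : Jb b2 b3 (E 1) = ![0, 0, -b3, b2] := by
  ext i; fin_cases i <;> simp [Jb, E]

lemma Jb_ideal : Jb b2 b3 ![0, 0, a, b] = ![b2 * a + b3 * b, b3 * a - b2 * b, 0, 0] := by
  ext i; fin_cases i <;> simp [Jb]

lemma br2_E_zero_E_one : br2 (E 0) (E 1) = 0 := by
  ext i; fin_cases i <;> simp [br2, E]

lemma br2_E_zero_ideal : br2 (E 0) ![0, 0, a, b] = ![0, 0, a, b] := by
  ext i; fin_cases i <;> simp [br2, E]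

lemma br2_ideal_E_one : br2 ![0, 0, a, b] (E 1) = ![0, 0, b, -a] := by
  ext i; fin_cases i <;> simp [br2, E]

lemma br2_ideal_ideal (c d : ℝ) : br2 ![0, 0, a, b] ![0, 0, c, d] = 0 := by
  ext i; fin_cases i <;> simp [br2]

end Computations

lemma E_ne_zero (i : Fin 4) : E i ≠ 0 := by
  simp [E]

/-- N(e1,e2) = (1/2)(b2²+b3²) e2 ≠ 0, where
N(X,Y) = (1/4)([JX,JY] - J[JX,Y] - J[X,JY] - [X,Y]); in particular J is not integrable. -/
theorem stmt_10 (b2 b3 : ℝ) (h : b2 ^ 2 + b3 ^ 2 = 1) :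
    ((1 / 4 : ℝ) • (br2 (Jb b2 b3 (E 0)) (Jb b2 b3 (E 1))
        - Jb b2 b3 (br2 (Jb b2 b3 (E 0)) (E 1))
        - Jb b2 b3 (br2 (E 0) (Jb b2 b3 (E 1)))
        - br2 (E 0) (E 1))
      = ((1 / 2) * (b2 ^ 2 + b3 ^ 2)) • E 1) ∧
    ((1 / 2) * (b2 ^ 2 + b3 ^ 2)) • E 1 ≠ (0 : Fin 4 → ℝ) := by
  refine ⟨?_, smul_ne_zero (by rw [h]; norm_num) (E_ne_zero 1)⟩
  rw [Jb_E_zero, Jb_E_one, br2_ideal_ideal, br2_ideal_E_one, br2_E_zero_ideal, Jb_ideal,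
    Jb_ideal, br2_E_zero_E_one]
  ext i; fin_cases i <;> simp [E] <;> ring
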